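/- Let P ⊇ Q be an entirely non-trivial inclusion of von Neumann algebras with faithful normal conditional expectation E_Q : P → Q, and let f ∈ Q be a projection with central support c_f^Q = 1 in Q. Then the inclusion fPf ⊇ fQf is again entirely non-trivial. -/

import Mathlib

open scoped ComplexOrder

variable {H : Type*} [NormedAddCommGroup H] [InnerProductSpace ℂ H] [CompleteSpace H]

/-- A faithful normal conditional expectation from the (carrier of the) von Neumann
algebra `P` onto its subalgebra `Q`: a positive, `Q`-bimodular, star-preserving,
linear idempotent projection of `P` onto `Q` which is faithful. -/
def IsCondExp (P Q : Set (H →L[ℂ] H)) (E : (H →L[ℂ] H) → (H →L[ℂ] H)) : Prop :=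
  Q ⊆ P ∧ (∀ x ∈ P, E x ∈ Q) ∧ (∀ y ∈ Q, E y = y) ∧
  (∀ x y, E (x + y) = E x + E y) ∧ (∀ (c : ℂ) (x : H →L[ℂ] H), E (c • x) = c • E x) ∧
  (∀ x, E (star x) = star (E x)) ∧ (∀ x, 0 ≤ x → 0 ≤ E x) ∧
  (∀ a ∈ Q, ∀ (x : H →L[ℂ] H), ∀ b ∈ Q, E (a * x * b) = a * E x * b) ∧
  (∀ x ∈ P, E (star x * x) = 0 → x = 0)

/-- `p` is an (orthogonal) projection belonging to `P`. -/
def IsProjectionIn (P : Set (H →L[ℂ] H)) (p : H →L[ℂ] H) : Prop :=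
  p ∈ P ∧ IsIdempotentElem p ∧ IsSelfAdjoint p

/-- σ-finiteness of a von Neumann algebra, expressed through the existence of a
faithful (normal) state. -/
def IsSigmaFinite (P : Set (H →L[ℂ] H)) : Prop :=
  ∃ φ : (H →L[ℂ] H) →ₗ[ℂ] ℂ, φ 1 = 1 ∧ (∀ x, 0 ≤ x → 0 ≤ φ x) ∧
    (∀ x ∈ P, φ (star x * x) = 0 → x = 0)

/-- Entire non-triviality in the equivalent form: `Pe ≠ Qe` for every nonzero
projection `e ∈ Q`. -/
def EntirelyNonTrivial (P Q : Set (H →L[ℂ] H)) : Prop :=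
  ∀ e : H →L[ℂ] H, IsProjectionIn Q e → e ≠ 0 →
    {w | ∃ x ∈ P, w = x * e} ≠ {w | ∃ y ∈ Q, w = y * e}

/-- The corner (reduced) algebra `fSf`. -/
def cornerSet (f : H →L[ℂ] H) (S : Set (H →L[ℂ] H)) : Set (H →L[ℂ] H) :=
  {w | ∃ x ∈ S, w = f * x * f}

/-!
Suppose `e ≤ f` is a nonzero projection of `fQf` with `(fPf)e = (fQf)e`. Comparing `f p e` with
its image under `E_Q` gives `f q (p - E_Q p) e = 0` for all `q ∈ Q`, `p ∈ P`. Hence `f` vanishes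
on the closed subspace `[Q' Q (P - E_Q P) e H]`, whose projection is central in `Q`; since
`c_f^Q = 1` this projection is zero, so `(p - E_Q p) e = 0` for every `p ∈ P`, i.e. `Pe = Qe`,
contradicting entire non-triviality of `P ⊇ Q`.
-/

theorem Submodule.topologicalClosure_span_mem_invtSubmodule {R M : Type*} [Semiring R]
    [TopologicalSpace R] [TopologicalSpace M] [AddCommMonoid M] [Module R M]
    [ContinuousSMul R M] [ContinuousAdd M] {G : Set M} {y : M →L[R] M}
    (hy : ∀ w ∈ G, y w ∈ G) :
    (span R G).topologicalClosure ∈ Module.End.invtSubmodule (y : M →ₗ[R] M) :=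
  topologicalClosure_mem_invtSubmodule <| (Module.End.mem_invtSubmodule _).2 <|
    span_le.2 fun w hw ↦ subset_span (hy w hw)

namespace VonNeumannAlgebra

def centralSpan (M : VonNeumannAlgebra H) (V : Set H) : Submodule ℂ H :=
  (Submodule.span ℂ {w | ∃ a ∈ M.commutant, ∃ q ∈ M, ∃ v ∈ V, w = a (q v)}).topologicalClosure

variable (M : VonNeumannAlgebra H) (V : Set H)

instance : (M.centralSpan V).HasOrthogonalProjection :=
  inferInstanceAs (Submodule.topologicalClosure _).HasOrthogonalProjection

theorem subset_centralSpan : V ⊆ M.centralSpan V := fun v hv ↦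
  Submodule.le_topologicalClosure _ <|
    Submodule.subset_span ⟨1, one_mem _, 1, one_mem _, v, hv, rfl⟩

theorem centralSpan_mem_invtSubmodule {y : H →L[ℂ] H} (hy : y ∈ M) :
    M.centralSpan V ∈ Module.End.invtSubmodule (y : H →ₗ[ℂ] H) := by
  refine Submodule.topologicalClosure_span_mem_invtSubmodule ?_
  rintro _ ⟨a, ha, q, hq, v, hv, rfl⟩
  exact ⟨a, ha, y * q, mul_mem hy hq, v, hv,
    DFunLike.congr_fun (mem_commutant_iff.1 ha y hy) (q v)⟩

theorem centralSpan_mem_invtSubmodule_of_mem_commutant {y : H →L[ℂ] H} (hy : y ∈ M.commutant) :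
    M.centralSpan V ∈ Module.End.invtSubmodule (y : H →ₗ[ℂ] H) := by
  refine Submodule.topologicalClosure_span_mem_invtSubmodule ?_
  rintro _ ⟨a, ha, q, hq, v, hv, rfl⟩
  exact ⟨y * a, mul_mem hy ha, q, hq, v, hv, rfl⟩

theorem starProjection_centralSpan_mem : (M.centralSpan V).starProjection ∈ M := by
  rw [IsStarProjection.mem_iff isStarProjection_starProjection, Submodule.range_starProjection]
  exact fun y hy ↦ M.centralSpan_mem_invtSubmodule_of_mem_commutant V hy

theorem starProjection_centralSpan_mem_commutant :
    (M.centralSpan V).starProjection ∈ M.commutant := by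
  rw [IsStarProjection.mem_iff isStarProjection_starProjection, Submodule.range_starProjection,
    commutant_commutant]
  exact fun y hy ↦ M.centralSpan_mem_invtSubmodule V hy

theorem centralSpan_le_ker {f : H →L[ℂ] H} (hf : f ∈ M) (hV : ∀ q ∈ M, ∀ v ∈ V, f (q v) = 0) :
    M.centralSpan V ≤ LinearMap.ker (f : H →ₗ[ℂ] H) := by
  refine Submodule.topologicalClosure_minimal _ (Submodule.span_le.2 ?_)
    (ContinuousLinearMap.isClosed_ker f)
  rintro _ ⟨a, ha, q, hq, v, hv, rfl⟩
  calc f (a (q v)) = a (f (q v)) := DFunLike.congr_fun (mem_commutant_iff.1 ha f hf) (q v)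
    _ = 0 := by rw [hV q hq v hv, map_zero]

theorem eq_zero_of_forall_apply_eq_zero {f : H →L[ℂ] H} (hf : f ∈ M)
    (hcf : ∀ z : H →L[ℂ] H, IsProjectionIn (M : Set (H →L[ℂ] H)) z →
      (∀ y ∈ M, z * y = y * z) → f * z = f → z = 1)
    (hV : ∀ q ∈ M, ∀ v ∈ V, f (q v) = 0) {v : H} (hv : v ∈ V) : v = 0 := by
  set z := (M.centralSpan V).starProjection
  have hz : IsStarProjection z := isStarProjection_starProjection
  have hfz : f * z = 0 := ContinuousLinearMap.ext fun h ↦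
    M.centralSpan_le_ker V hf hV (Submodule.starProjection_apply_mem _ h)
  have hz0 : z = 0 := by
    refine sub_eq_self.1 (hcf (1 - z) ⟨sub_mem (one_mem M) (M.starProjection_centralSpan_mem V),
      hz.one_sub.isIdempotentElem, hz.one_sub.isSelfAdjoint⟩ (fun y hy ↦ ?_) ?_)
    · rw [sub_mul, mul_sub, one_mul, mul_one,
        mem_commutant_iff.1 (M.starProjection_centralSpan_mem_commutant V) y hy]
    · rw [mul_sub, mul_one, hfz, sub_zero]
  calc v = z v :=
        ((M.centralSpan V).starProjection_eq_self_iff.2 (M.subset_centralSpan V hv)).symm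
    _ = 0 := by rw [hz0, zero_apply]

end VonNeumannAlgebra

theorem exists_sub_condExp_mul_ne_zero {P Q : Set (H →L[ℂ] H)} {E : (H →L[ℂ] H) → (H →L[ℂ] H)}
    (hQP : Q ⊆ P) (hEQ : ∀ x ∈ P, E x ∈ Q) (hENT : EntirelyNonTrivial P Q) {e : H →L[ℂ] H}
    (he : IsProjectionIn Q e) (he0 : e ≠ 0) : ∃ x ∈ P, (x - E x) * e ≠ 0 := by
  by_contra! h
  refine hENT e he he0 (Set.Subset.antisymm ?_ ?_)
  · rintro _ ⟨x, hx, rfl⟩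
    exact ⟨E x, hEQ x hx, sub_eq_zero.1 (by rw [← sub_mul]; exact h x hx)⟩
  · rintro _ ⟨y, hy, rfl⟩
    exact ⟨y, hQP hy, rfl⟩

theorem mul_mul_sub_condExp_mul_eq_zero {P Q : VonNeumannAlgebra H}
    {E : (H →L[ℂ] H) → (H →L[ℂ] H)} (hQP : (Q : Set (H →L[ℂ] H)) ⊆ P)
    (hEid : ∀ y ∈ Q, E y = y) (hEbimod : ∀ a ∈ Q, ∀ x, ∀ b ∈ Q, E (a * x * b) = a * E x * b)
    {f e : H →L[ℂ] H} (hf : f ∈ Q) (he : e ∈ Q) (hfe : f * e = e)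
    (hcorner : {w | ∃ x ∈ cornerSet f (P : Set (H →L[ℂ] H)), w = x * e} =
      {w | ∃ y ∈ cornerSet f (Q : Set (H →L[ℂ] H)), w = y * e})
    {q p : H →L[ℂ] H} (hq : q ∈ Q) (hp : p ∈ P) : f * q * (p - E p) * e = 0 := by
  have hEqp : E (q * p) = q * E p := by simpa using hEbimod q hq p 1 (one_mem Q)
  obtain ⟨_, ⟨r, hr, rfl⟩, hpr⟩ : f * (q * p) * f * e ∈
      {w | ∃ y ∈ cornerSet f (Q : Set (H →L[ℂ] H)), w = y * e} :=
    hcorner ▸ ⟨_, ⟨q * p, mul_mem (hQP hq) hp, rfl⟩, rfl⟩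
  have hpr' : f * (q * p) * e = f * r * e := by simpa only [mul_assoc, hfe] using hpr
  calc f * q * (p - E p) * e = f * (q * p) * e - E (f * (q * p) * e) := by
        rw [hEbimod f hf _ e he, hEqp, mul_sub, sub_mul, ← mul_assoc, ← mul_assoc]
    _ = 0 := by rw [hpr', hEid _ (mul_mem (mul_mem hf hr) he), sub_self]

/-- if `P ⊇ Q` is entirely non-trivial and `f ∈ Q` is a projection with
central support `1` in `Q`, then `fPf ⊇ fQf` is entirely non-trivial. -/
theorem stmt2 (P Q : VonNeumannAlgebra H) (E : (H →L[ℂ] H) → (H →L[ℂ] H))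
    (hE : IsCondExp (P : Set (H →L[ℂ] H)) (Q : Set (H →L[ℂ] H)) E)
    (hENT : EntirelyNonTrivial (P : Set (H →L[ℂ] H)) (Q : Set (H →L[ℂ] H)))
    (f : H →L[ℂ] H) (hf : IsProjectionIn (Q : Set (H →L[ℂ] H)) f)
    (hcf : ∀ z : H →L[ℂ] H, IsProjectionIn (Q : Set (H →L[ℂ] H)) z →
      (∀ y ∈ Q, z * y = y * z) → f * z = f → z = 1) :
    EntirelyNonTrivial (cornerSet f (P : Set (H →L[ℂ] H)))
      (cornerSet f (Q : Set (H →L[ℂ] H))) := by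
  obtain ⟨hQP, hEQ, hEid, -, -, -, -, hEbimod, -⟩ := hE
  obtain ⟨hfQ, hf_idem, -⟩ := hf
  rintro _ ⟨⟨y, hy, rfl⟩, he⟩ he0 hcorner
  have heQ : f * y * f ∈ Q := mul_mem (mul_mem hfQ hy) hfQ
  have hfe : f * (f * y * f) = f * y * f := by rw [← mul_assoc, ← mul_assoc, hf_idem.eq]
  obtain ⟨x, hxP, hx⟩ := exists_sub_condExp_mul_ne_zero hQP hEQ hENT ⟨heQ, he⟩ he0
  refine hx (ContinuousLinearMap.ext fun h ↦ Q.eq_zero_of_forall_apply_eq_zero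
    (V := {v | ∃ p ∈ P, ∃ h, v = (p - E p) ((f * y * f) h)}) hfQ hcf ?_ ⟨x, hxP, h, rfl⟩)
  rintro q hq _ ⟨p, hp, h, rfl⟩
  exact DFunLike.congr_fun
    (mul_mul_sub_condExp_mul_eq_zero hQP hEid hEbimod hfQ heQ hfe hcorner hq hp) h
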